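/- Let G be a graph on n vertices chosen uniformly at random (each edge present independently with probability 1/2). For 2 ≤ m ≤ n, the probability that G has an automorphism moving exactly m vertices is at most 2^{-m(n/2 - 3m/8 - 2·log₂ n)}. -/

import Mathlib

open scoped Classical

/-!
A graph fixed by a permutation `π` is constant on the `⟨π⟩`-orbits of unordered pairs, so it is
determined by its edges among any set `R` of pairs meeting every orbit. Let `K` contain one point
of each nontrivial cycle of `π`, so `k = #K ≤ m / 2`. A pair meeting the support `S` of `π` is
moved by a power of `π` onto a pair meeting `K`, so `R` can be taken to be the pairs that meet `K`
or avoid `S`; then `#R = C(n,2) - C(n-k,2) + C(n-m,2)`. Each `π` therefore fixes at most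
`2 ^ #R` graphs, and at most `n ^ m` permutations move exactly `m` points. The saving
`C(n-k,2) - C(n-m,2) = (m-k)(2n-m-k-1)/2` is at least `mn/2 - 3m²/8 - m/4`, and the factor
`n ^ m` together with the `m/4` fits into the `2m log₂ n` of the bound.
-/

open Finset Equiv

namespace Finset

variable {α : Type*} [DecidableEq α]

def offDiagSym2 (s : Finset α) : Finset (Sym2 α) := {e ∈ s.sym2 | ¬e.IsDiag}

theorem mk_mem_offDiagSym2 {s : Finset α} {a b : α} :
    s(a, b) ∈ s.offDiagSym2 ↔ a ∈ s ∧ b ∈ s ∧ a ≠ b := by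
  simp [offDiagSym2, and_assoc]

theorem offDiagSym2_mono {s t : Finset α} (h : s ⊆ t) : s.offDiagSym2 ⊆ t.offDiagSym2 :=
  filter_subset_filter _ (sym2_mono h)

theorem card_offDiagSym2 (s : Finset α) : #s.offDiagSym2 = (#s).choose 2 := by
  unfold offDiagSym2
  have hdiag : #{e ∈ s.sym2 | e.IsDiag} = #s := by
    rw [← card_image_of_injective s Sym2.diag_injective]
    congr 1
    ext e
    induction e using Sym2.ind with
    | h a b => aesop (add simp Sym2.diag)
  have hsucc : (#s + 1).choose 2 = #s + (#s).choose 2 := by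
    simpa using Nat.choose_succ_succ' (#s) 1
  have := card_filter_add_card_filter_not (s := s.sym2) Sym2.IsDiag
  rw [card_sym2, hsucc, hdiag] at this
  omega

end Finset

namespace Equiv.Perm

variable {α : Type*} [Fintype α] [DecidableEq α]

theorem exists_cycle_transversal (π : Perm α) :
    ∃ K ⊆ π.support, 2 * #K ≤ #π.support ∧ ∀ x ∈ π.support, ∃ y ∈ K, π.SameCycle x y := by
  have hne : ∀ c ∈ π.cycleFactorsFinset, ∃ y, y ∈ c.support := fun c hc =>
    (mem_cycleFactorsFinset_iff.mp hc).1.nonempty_support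
  choose rep hrep using hne
  refine ⟨π.cycleFactorsFinset.attach.image fun c => rep c.1 c.2, ?_, ?_, ?_⟩
  · simp only [subset_iff, mem_image, mem_attach, true_and, Subtype.exists]
    rintro _ ⟨c, hc, rfl⟩
    exact mem_cycleFactorsFinset_support_le hc (hrep c hc)
  · calc 2 * #(π.cycleFactorsFinset.attach.image fun c => rep c.1 c.2)
        ≤ Multiset.card π.cycleType * 2 := by
          rw [mul_comm, cycleType_def, Multiset.card_map]
          exact Nat.mul_le_mul_right _ (card_image_le.trans (card_attach).le)
      _ ≤ π.cycleType.sum := Multiset.card_nsmul_le_sum fun _ => two_le_of_mem_cycleType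
      _ = #π.support := sum_cycleType π
  · intro x hx
    have hc := cycleOf_mem_cycleFactorsFinset_iff.mpr hx
    exact ⟨rep _ hc, mem_image_of_mem _ (mem_attach _ ⟨_, hc⟩),
      (mem_support_cycleOf_iff.mp (hrep _ hc)).1⟩

theorem card_filter_support_subset (s : Finset α) :
    #{π : Perm α | π.support ⊆ s} = (#s).factorial := by
  rw [← Fintype.card_subtype, ← Fintype.card_coe s, ← Fintype.card_perm]
  refine Fintype.card_congr ((Equiv.subtypeEquivRight fun π => ?_).trans
    (Perm.subtypeEquivSubtypePerm (· ∈ s)).symm)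
  simp only [subset_iff, mem_support]
  exact forall_congr' fun a => not_imp_comm

theorem card_filter_card_support_eq_le (m : ℕ) :
    #{π : Perm α | #π.support = m} ≤ (Fintype.card α).descFactorial m := by
  calc #{π : Perm α | #π.support = m}
      ≤ #((powersetCard m univ).biUnion fun s => {π : Perm α | π.support ⊆ s}) := by
        refine card_le_card fun π hπ => mem_biUnion.mpr ⟨π.support, ?_, ?_⟩
        · simpa using hπ
        · simp
    _ ≤ ∑ s ∈ powersetCard m univ, #{π : Perm α | π.support ⊆ s} := card_biUnion_le
    _ = ∑ _s ∈ powersetCard m univ, m.factorial :=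
        sum_congr rfl fun s hs => by rw [card_filter_support_subset, (mem_powersetCard.mp hs).2]
    _ = (Fintype.card α).descFactorial m := by
        rw [sum_const, card_powersetCard, card_univ, smul_eq_mul,
          Nat.descFactorial_eq_factorial_mul_choose, mul_comm]

end Equiv.Perm

namespace SimpleGraph

variable {V : Type*}

def autSubgroup (G : SimpleGraph V) : Subgroup (Perm V) where
  carrier := {π | ∀ u v, G.Adj (π u) (π v) ↔ G.Adj u v}
  mul_mem' hσ hτ u v := (hσ _ _).trans (hτ u v)
  one_mem' _ _ := Iff.rfl
  inv_mem' {π} h u v := by simpa using (h (π⁻¹ u) (π⁻¹ v)).symm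

variable [Fintype V] [DecidableEq V]

theorem card_filter_mem_autSubgroup_le (π : Perm V) (R : Finset (Sym2 V))
    (hR : ∀ u v, u ≠ v → ∃ j : ℤ, s((π ^ j) u, (π ^ j) v) ∈ R) :
    #{G : SimpleGraph V | π ∈ G.autSubgroup} ≤ 2 ^ #R := by
  rw [← card_powerset]
  refine card_le_card_of_injOn (fun G => {e ∈ R | e ∈ G.edgeSet})
    (fun _ _ => mem_powerset.mpr (filter_subset _ _)) ?_
  intro G hG G' hG' hGG'
  simp only [coe_filter, mem_univ, true_and, Set.mem_ofPred_eq] at hG hG'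
  ext u v
  obtain rfl | huv := eq_or_ne u v
  · simp
  obtain ⟨j, hj⟩ := hR u v huv
  have hedge := congrArg (s((π ^ j) u, (π ^ j) v) ∈ ·) hGG'
  simp only [mem_filter, hj, true_and, mem_edgeSet, eq_iff_iff] at hedge
  rwa [← G.autSubgroup.zpow_mem hG j u v, ← G'.autSubgroup.zpow_mem hG' j u v]

theorem exists_zpow_mem_offDiagSym2_sdiff (π : Perm V) {K : Finset V}
    (hK : ∀ x ∈ π.support, ∃ y ∈ K, π.SameCycle x y) {u v : V} (huv : u ≠ v) :
    ∃ j : ℤ, s((π ^ j) u, (π ^ j) v) ∈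
      univ.offDiagSym2 \ (Kᶜ.offDiagSym2 \ π.supportᶜ.offDiagSym2) := by
  have key : ∀ j : ℤ, s((π ^ j) u, (π ^ j) v) ∈
      univ.offDiagSym2 \ (Kᶜ.offDiagSym2 \ π.supportᶜ.offDiagSym2) ↔
      (π ^ j) u ∈ K ∨ (π ^ j) v ∈ K ∨ ((π ^ j) u ∉ π.support ∧ (π ^ j) v ∉ π.support) := by
    intro j
    simp only [mem_sdiff, mk_mem_offDiagSym2, mem_univ, mem_compl, ne_eq,
      (π ^ j).injective.eq_iff, huv]
    tauto
  simp only [key]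
  by_cases hfix : u ∉ π.support ∧ v ∉ π.support
  · exact ⟨0, by simp only [zpow_zero]; tauto⟩
  obtain ⟨x, hx, hxuv⟩ : ∃ x ∈ π.support, x = u ∨ x = v := by
    by_contra! h
    exact hfix ⟨fun hu => (h u hu).1 rfl, fun hv => (h v hv).2 rfl⟩
  obtain ⟨y, hyK, j, rfl⟩ := hK x hx
  exact ⟨j, by rcases hxuv with rfl | rfl <;> simp [hyK]⟩

theorem card_offDiagSym2_sdiff_add (π : Perm V) {K : Finset V} (hKS : K ⊆ π.support) :
    #(univ.offDiagSym2 \ (Kᶜ.offDiagSym2 \ π.supportᶜ.offDiagSym2)) + (#Kᶜ).choose 2 =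
      (Fintype.card V).choose 2 + (#π.supportᶜ).choose 2 := by
  have hSK := offDiagSym2_mono (compl_subset_compl.mpr hKS)
  have hK := card_sdiff_of_subset hSK
  have hXU := (sdiff_subset (s := Kᶜ.offDiagSym2) (t := π.supportᶜ.offDiagSym2)).trans
    (offDiagSym2_mono (subset_univ Kᶜ))
  have hU := card_sdiff_of_subset hXU
  have hle := card_le_card hSK
  have hle' := card_le_card hXU
  simp only [card_offDiagSym2, card_univ] at hK hU hle hle' ⊢
  omega

theorem card_filter_mem_autSubgroup_mul_le (π : Perm V) :
    #{G : SimpleGraph V | π ∈ G.autSubgroup} * 2 ^ (Fintype.card V - #π.support / 2).choose 2 ≤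
      2 ^ ((Fintype.card V).choose 2 + (Fintype.card V - #π.support).choose 2) := by
  obtain ⟨K, hKS, hK2, hK⟩ := π.exists_cycle_transversal
  have hKc : Fintype.card V - #π.support / 2 ≤ #Kᶜ := by rw [card_compl]; omega
  calc _ ≤ 2 ^ #(univ.offDiagSym2 \ (Kᶜ.offDiagSym2 \ π.supportᶜ.offDiagSym2)) *
        2 ^ (#Kᶜ).choose 2 :=
        Nat.mul_le_mul
          (card_filter_mem_autSubgroup_le π _ fun _ _ => exists_zpow_mem_offDiagSym2_sdiff π hK)
          (Nat.pow_le_pow_right two_pos (Nat.choose_le_choose 2 hKc))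
    _ = _ := by rw [← pow_add, card_offDiagSym2_sdiff_add π hKS, card_compl]

theorem card_exists_mem_autSubgroup_mul_le (m : ℕ) :
    Nat.card {G : SimpleGraph V // ∃ π ∈ G.autSubgroup, #π.support = m} *
        2 ^ (Fintype.card V - m / 2).choose 2 ≤
      Fintype.card V ^ m * 2 ^ ((Fintype.card V).choose 2 + (Fintype.card V - m).choose 2) := by
  have hunion : ({G : SimpleGraph V | ∃ π ∈ G.autSubgroup, #π.support = m} : Finset _) ⊆
      ({π : Perm V | #π.support = m} : Finset _).biUnion
        fun π => ({G : SimpleGraph V | π ∈ G.autSubgroup} : Finset _) := by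
    intro G hG
    simp only [mem_filter, mem_univ, true_and, mem_biUnion] at hG ⊢
    obtain ⟨π, hπ, hm⟩ := hG
    exact ⟨π, hm, hπ⟩
  rw [Nat.card_eq_fintype_card, Fintype.card_subtype]
  calc _ ≤ (∑ π ∈ {π : Perm V | #π.support = m}, #{G : SimpleGraph V | π ∈ G.autSubgroup}) *
        2 ^ (Fintype.card V - m / 2).choose 2 :=
        Nat.mul_le_mul_right _ ((card_le_card hunion).trans card_biUnion_le)
    _ ≤ ∑ π ∈ {π : Perm V | #π.support = m},
        2 ^ ((Fintype.card V).choose 2 + (Fintype.card V - m).choose 2) := by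
        rw [sum_mul]
        refine sum_le_sum fun π hπ => ?_
        rw [← (mem_filter.mp hπ).2]
        exact card_filter_mem_autSubgroup_mul_le π
    _ ≤ _ := by
        rw [sum_const, smul_eq_mul]
        exact Nat.mul_le_mul_right _
          ((Perm.card_filter_card_support_eq_le m).trans (Nat.descFactorial_le_pow _ m))

end SimpleGraph

theorem Nat.cast_choose_two_sub_sub_le {n m : ℕ} (hmn : m ≤ n) :
    ((n - m).choose 2 : ℝ) - (n - m / 2).choose 2 ≤ 3 * m ^ 2 / 8 + m / 4 - m * n / 2 := by
  obtain rfl | hm := m.eq_zero_or_pos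
  · simp
  have hhalf : ((m / 2 : ℕ) : ℝ) ≤ m / 2 := Nat.cast_div_le
  rw [Nat.cast_choose_two, Nat.cast_choose_two, Nat.cast_sub hmn,
    Nat.cast_sub ((Nat.div_le_self m 2).trans hmn)]
  have hmr : (m : ℝ) ≤ n := by exact_mod_cast hmn
  have hm1 : (1 : ℝ) ≤ m := by exact_mod_cast hm
  have hpos : (0 : ℝ) ≤ 2 * n - m - 1 - ((m / 2 : ℕ) : ℝ) + m / 2 := by linarith
  nlinarith [mul_nonneg (sub_nonneg.mpr hhalf) hpos]

theorem div_two_pow_choose_two_le_of_mul_le {n m A : ℕ} (hm2 : 2 ≤ m) (hmn : m ≤ n)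
    (hA : A * 2 ^ (n - m / 2).choose 2 ≤ n ^ m * 2 ^ (n.choose 2 + (n - m).choose 2)) :
    (A : ℝ) / 2 ^ n.choose 2 ≤
      (2 : ℝ) ^ (-(m : ℝ) * ((n : ℝ) / 2 - 3 * (m : ℝ) / 8 - 2 * Real.logb 2 n)) := by
  have hn : (0 : ℝ) < n := by exact_mod_cast two_pos.trans_le (hm2.trans hmn)
  have hlog : 1 ≤ Real.logb 2 n := by
    rw [Real.le_logb_iff_rpow_le one_lt_two hn, Real.rpow_one]
    exact_mod_cast hm2.trans hmn
  have hpow : (2 : ℝ) ^ ((m : ℝ) * Real.logb 2 n) = n ^ m := by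
    rw [mul_comm, Real.rpow_mul zero_le_two, Real.rpow_logb two_pos (by norm_num) hn,
      Real.rpow_natCast]
  have hA' : (A : ℝ) ≤ 2 ^ ((m : ℝ) * Real.logb 2 n + n.choose 2 + (n - m).choose 2 -
      (n - m / 2).choose 2) := by
    rw [Real.rpow_sub two_pos, Real.rpow_add two_pos, Real.rpow_add two_pos, hpow,
      le_div_iff₀ (by positivity)]
    simpa only [Real.rpow_natCast, pow_add, mul_assoc] using (by exact_mod_cast hA :
      (A : ℝ) * 2 ^ (n - m / 2).choose 2 ≤ n ^ m * 2 ^ (n.choose 2 + (n - m).choose 2))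
  rw [div_le_iff₀ (by positivity), ← Real.rpow_natCast, ← Real.rpow_add two_pos]
  refine hA'.trans (Real.rpow_le_rpow_of_exponent_le one_le_two ?_)
  nlinarith [Nat.cast_choose_two_sub_sub_le hmn, mul_le_mul_of_nonneg_left hlog (Nat.cast_nonneg m)]

/-- For a uniformly random graph `G` on `n` vertices (each edge present independently
with probability `1/2`) and `2 ≤ m ≤ n`, the probability that `G` has an automorphism
moving exactly `m` vertices is at most `2^{-m(n/2 - 3m/8 - 2·log₂ n)}`. -/
theorem prob_automorphism_moving_m (n m : ℕ) (hm2 : 2 ≤ m) (hmn : m ≤ n) :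
    (Nat.card {G : SimpleGraph (Fin n) //
        ∃ π : Equiv.Perm (Fin n),
          (∀ u v, G.Adj (π u) (π v) ↔ G.Adj u v) ∧ π.support.card = m} : ℝ)
        / 2 ^ n.choose 2
      ≤ (2 : ℝ) ^ (-(m : ℝ) * ((n : ℝ) / 2 - 3 * (m : ℝ) / 8 - 2 * Real.logb 2 n)) := by
  have hcount := SimpleGraph.card_exists_mem_autSubgroup_mul_le (V := Fin n) m
  rw [Fintype.card_fin] at hcount
  exact div_two_pow_choose_two_le_of_mul_le hm2 hmn hcount
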